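/- arXiv:2208.04589 — 6 statements merged into one kernel-verified Lean document; each statement's English description precedes it below -/
import Mathlib

section
/- Let f, g : ℝ → ℝᵏ be functions such that the components of f are linearly independent (no nonzero vector h ∈ ℝᵏ satisfies ⟨f(x), h⟩ = 0 for all x). If f' exists everywhere and for every choice of points x₁,...,x_k the vectors f'(x₁),...,f'(x_k) are linearly dependent, then there exists a nonzero h ∈ ℝᵏ and a constant c with ⟨f(x), h⟩ = c for all x. Consequently, if additionally the family (f_j)_{1≤j≤k} together with the constant function 1 is linearly independent, there exist k points x₁,...,x_k such that f'(x₁),...,f'(x_k) are linearly independent. -/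
/-!
If the derivatives `f' x` spanned the whole space, a basis could be extracted from them, giving
`k` points with linearly independent derivatives. So they span a proper subspace, and any
nonzero `h` orthogonal to it has `⟪f' x, h⟫ = 0` for all `x`: the function `x ↦ ⟪f x, h⟫`
has zero derivative everywhere and is therefore constant. That constant combination
contradicts the independence of the components of `f` together with `1`.
-/

open Module Submodule InnerProductSpace
open scoped RealInnerProductSpace

theorem exists_linearIndependent_comp_of_span_range_eq_top {K V ι : Type*} [DivisionRing K]
    [AddCommGroup V] [Module K V] [FiniteDimensional K V] (v : ι → V)
    (hv : span K (Set.range v) = ⊤) :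
    ∃ pts : Fin (finrank K V) → ι, LinearIndependent K (v ∘ pts) := by
  obtain ⟨κ, a, -, hspan, hli⟩ := exists_linearIndependent' K v
  let b : Basis κ K V := Basis.mk hli (by rw [hspan, hv])
  have : Fintype κ := FiniteDimensional.fintypeBasisIndex b
  let e : Fin (finrank K V) ≃ κ :=
    (Fintype.equivFinOfCardEq (finrank_eq_card_basis b).symm).symm
  exact ⟨a ∘ e, hli.comp e e.injective⟩

theorem exists_ne_zero_forall_inner_eq_zero_of_span_range_ne_top {E ι : Type*}
    [NormedAddCommGroup E] [InnerProductSpace ℝ E] [FiniteDimensional ℝ E] (v : ι → E)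
    (hv : span ℝ (Set.range v) ≠ ⊤) :
    ∃ h : E, h ≠ 0 ∧ ∀ i, ⟪v i, h⟫ = 0 := by
  have hperp : (span ℝ (Set.range v))ᗮ ≠ ⊥ := fun h => hv (orthogonal_eq_bot_iff.mp h)
  obtain ⟨h, hmem, hne⟩ := exists_mem_ne_zero_of_ne_bot hperp
  exact ⟨h, hne, fun i => (mem_orthogonal _ h).mp hmem (v i) (subset_span ⟨i, rfl⟩)⟩

theorem inner_eq_of_forall_inner_deriv_eq_zero {E : Type*} [NormedAddCommGroup E]
    [InnerProductSpace ℝ E] {f f' : ℝ → E} (hf : ∀ x, HasDerivAt f (f' x) x) {h : E}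
    (hf'h : ∀ x, ⟪f' x, h⟫ = 0) (x y : ℝ) :
    ⟪f x, h⟫ = ⟪f y, h⟫ := by
  have hderiv : ∀ t, HasDerivAt (fun s => ⟪f s, h⟫) 0 t := fun t => by
    simpa [hf'h t] using (hf t).inner ℝ (hasDerivAt_const t h)
  exact is_const_of_deriv_eq_zero (fun t => (hderiv t).differentiableAt)
    (fun t => (hderiv t).deriv) x y

theorem stmt0_general {k : ℕ}
    (f f' : ℝ → EuclideanSpace ℝ (Fin k))
    (hdiff : ∀ x, HasDerivAt f (f' x) x)
    (hdep : ∀ pts : Fin k → ℝ, ¬ LinearIndependent ℝ (fun i => f' (pts i))) :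
    (∃ h : EuclideanSpace ℝ (Fin k), h ≠ 0 ∧ ∃ c : ℝ, ∀ x, (inner ℝ (f x) h : ℝ) = c) ∧
    ((∀ (h : EuclideanSpace ℝ (Fin k)) (a : ℝ),
        (∀ x, (inner ℝ (f x) h : ℝ) + a = 0) → h = 0 ∧ a = 0) →
      ∃ pts : Fin k → ℝ, LinearIndependent ℝ (fun i => f' (pts i))) := by
  have hspan : span ℝ (Set.range f') ≠ ⊤ := fun htop => by
    have hpts := exists_linearIndependent_comp_of_span_range_eq_top f' htop
    rw [finrank_euclideanSpace_fin] at hpts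
    obtain ⟨pts, hli⟩ := hpts
    exact hdep pts hli
  obtain ⟨h, hne, hf'h⟩ := exists_ne_zero_forall_inner_eq_zero_of_span_range_ne_top f' hspan
  have hconst : ∀ x, ⟪f x, h⟫ = ⟪f 0, h⟫ := fun x =>
    inner_eq_of_forall_inner_deriv_eq_zero hdiff hf'h x 0
  refine ⟨⟨h, hne, _, hconst⟩, fun hind => ?_⟩
  exact absurd (hind h (-⟪f 0, h⟫) fun x => by rw [hconst x]; ring).1 hne

/-- If `f : ℝ → ℝᵏ` is differentiable everywhere with derivative `f'`, its
components are linearly independent as functions, and for every choice of `k` points the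
derivatives are linearly dependent, then some nontrivial linear combination of the components
of `f` is constant.  Consequently, if additionally the components of `f` together with the
constant function `1` are linearly independent, then there exist `k` points at which the
derivatives are linearly independent. -/
theorem stmt0 {k : ℕ}
    (f f' : ℝ → EuclideanSpace ℝ (Fin k))
    (hdiff : ∀ x, HasDerivAt f (f' x) x)
    (hcomp_indep : ∀ h : EuclideanSpace ℝ (Fin k),
      (∀ x, (inner ℝ (f x) h : ℝ) = 0) → h = 0)
    (hdep : ∀ pts : Fin k → ℝ, ¬ LinearIndependent ℝ (fun i => f' (pts i))) :
    (∃ h : EuclideanSpace ℝ (Fin k), h ≠ 0 ∧ ∃ c : ℝ, ∀ x, (inner ℝ (f x) h : ℝ) = c) ∧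
    ((∀ (h : EuclideanSpace ℝ (Fin k)) (a : ℝ),
        (∀ x, (inner ℝ (f x) h : ℝ) + a = 0) → h = 0 ∧ a = 0) →
      ∃ pts : Fin k → ℝ, LinearIndependent ℝ (fun i => f' (pts i))) :=
  stmt0_general f f' hdiff hdep
end

section
/- Let λ : 𝒳 → ℝᵈ be a function and suppose there exist d+1 points x₀, x₁, ..., x_d in 𝒳 such that the d × d matrix L with columns λ(x_i) − λ(x₀), i = 1,...,d, is invertible. If g, ĝ : ℝᵖ → ℝᵈ and scalar functions a, â : 𝒳 → ℝ satisfy ⟨g(m), λ(x)⟩ + a(x) = ⟨ĝ(m), λ̂(x)⟩ + â(x) for all m and all x ∈ 𝒳 (for some λ̂ : 𝒳 → ℝᵈ), then there exist a d × d matrix A and a vector c ∈ ℝᵈ such that g(m) = A · ĝ(m) + c for all m. -/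
/-!
Subtracting the identity at `x₀` from the one at `xⱼ` gives, for every `m`,
`Lᵀ g(m) = L̂ᵀ ĝ(m) + b` with `L̂` the difference matrix of `λ̂` and `bⱼ` the differences of
`â - a`; multiplying by `L⁻ᵀ` gives the affine relation.
-/

open Matrix

theorem Matrix.exists_affine_of_mulVec_eq_mulVec_add {α m n R : Type*} [Fintype m] [DecidableEq m]
    [Fintype n] [CommRing R] {M : Matrix m m R} (hM : IsUnit M.det) (N : Matrix m n R) (b : m → R)
    {f : α → m → R} {g : α → n → R} (h : ∀ t, M *ᵥ f t = N *ᵥ g t + b) :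
    ∃ (A : Matrix m n R) (c : m → R), ∀ t, f t = A *ᵥ g t + c :=
  ⟨M⁻¹ * N, M⁻¹ *ᵥ b, fun t => by
    rw [← mulVec_mulVec, ← mulVec_add, ← h, mulVec_mulVec, nonsing_inv_mul _ hM, one_mulVec]⟩

section Differences

variable {X ι κ R : Type*} [Fintype ι] [CommRing R]

def differenceMatrix (lam : X → ι → R) (x₀ : X) (x : κ → X) : Matrix ι κ R :=
  of fun i j => lam (x j) i - lam x₀ i

theorem differenceMatrix_transpose_mulVec [Fintype κ] (lam : X → ι → R) (x₀ : X) (x : κ → X)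
    (u : ι → R) : (differenceMatrix lam x₀ x)ᵀ *ᵥ u = fun j => u ⬝ᵥ (lam (x j) - lam x₀) := by
  ext j
  simp only [mulVec, dotProduct, differenceMatrix, transpose_apply, of_apply, Pi.sub_apply, mul_comm]

theorem dotProduct_sub_eq_of_dotProduct_add_eq {lam lamhat : X → ι → R} {a ahat : X → R}
    {u v : ι → R} (h : ∀ y, u ⬝ᵥ lam y + a y = v ⬝ᵥ lamhat y + ahat y) (y y₀ : X) :
    u ⬝ᵥ (lam y - lam y₀) = v ⬝ᵥ (lamhat y - lamhat y₀) + ((ahat y - a y) - (ahat y₀ - a y₀)) := by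
  rw [dotProduct_sub, dotProduct_sub]
  linear_combination h y - h y₀

end Differences

/-- if the matrix `L` of differences `λ(xᵢ) − λ(x₀)` is invertible and
`⟨g m, λ x⟩ + a x = ⟨ĝ m, λ̂ x⟩ + â x` for all `m, x`, then `g m = A ĝ m + c` for some matrix
`A` and vector `c`. -/
theorem stmt2 {𝒳 : Type*} {d p : ℕ}
    (lam lamhat : 𝒳 → Fin d → ℝ)
    (x : Fin (d + 1) → 𝒳)
    (L : Matrix (Fin d) (Fin d) ℝ)
    (hL : ∀ i j, L i j = lam (x j.succ) i - lam (x 0) i)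
    (hLinv : IsUnit L.det)
    (g ghat : (Fin p → ℝ) → Fin d → ℝ)
    (a ahat : 𝒳 → ℝ)
    (heq : ∀ (m : Fin p → ℝ) (xx : 𝒳),
      (∑ i, g m i * lam xx i) + a xx = (∑ i, ghat m i * lamhat xx i) + ahat xx) :
    ∃ (A : Matrix (Fin d) (Fin d) ℝ) (c : Fin d → ℝ),
      ∀ m, g m = A.mulVec (ghat m) + c := by
  have hLdiff : L = differenceMatrix lam (x 0) (x ∘ Fin.succ) := Matrix.ext hL
  have hLT : IsUnit Lᵀ.det := by rwa [det_transpose]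
  refine exists_affine_of_mulVec_eq_mulVec_add hLT (differenceMatrix lamhat (x 0) (x ∘ Fin.succ))ᵀ
    (fun j => (ahat (x j.succ) - a (x j.succ)) - (ahat (x 0) - a (x 0))) fun m => ?_
  rw [hLdiff, differenceMatrix_transpose_mulVec, differenceMatrix_transpose_mulVec]
  ext j
  exact dotProduct_sub_eq_of_dotProduct_add_eq (heq m) _ _
end

section
/- Let (Ω, P) be a probability space, t a Bernoulli random variable, x a random variable, and y an integrable random variable. Define the propensity score e(x) = E[t | x] and assume 0 < e(x) < 1 almost surely. If y is independent of t conditionally on x (unconfoundedness), then E[y · t / e(x)] = E[E[y | x, t = 1]] (i.e., the inverse probability weighted estimator recovers the mean of the potential outcome under treatment). -/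
/-!
Conditioning on the covariates turns `y t` into `E[y t | x] = g(x) e(x)`: on every event
`{x ∈ A}` the integrals of `y t` and of `g(x) t` agree by the defining property of `g`, and
`g(x)` can be pulled out of `E[g(x) t | x] = g(x) E[t | x]`. Since `1 / e(x)` is also a function
of `x`, `E[y t / e(x)] = E[E[y t | x] / e(x)] = E[g(x)]`.
-/

open MeasureTheory ProbabilityTheory

lemma eq_indicator_one_of_eq_zero_or_eq_one {α M : Type*} [Zero M] [One M] {t : α → M}
    (ht : ∀ a, t a = 0 ∨ t a = 1) : t = {a | t a = 1}.indicator 1 := by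
  funext a
  by_cases h : t a = 1
  · rw [Set.indicator_of_mem (s := {a | t a = 1}) h, h, Pi.one_apply]
  · rw [Set.indicator_of_notMem (s := {a | t a = 1}) h]
    exact (ht a).resolve_right h

section ConditionalExpectation

variable {Ω : Type*} {m mΩ : MeasurableSpace Ω} {μ : Measure Ω}

theorem integral_mul_condExp_of_stronglyMeasurable_left (hm : m ≤ mΩ) [SigmaFinite (μ.trim hm)]
    {f g : Ω → ℝ} (hf : StronglyMeasurable[m] f) (hfg : Integrable (f * g) μ)
    (hg : Integrable g μ) : ∫ ω, (f * g) ω ∂μ = ∫ ω, (f * μ[g | m]) ω ∂μ :=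
  (integral_condExp hm).symm.trans
    (integral_congr_ae (condExp_mul_of_stronglyMeasurable_left hf hfg hg))

variable [IsFiniteMeasure μ] {T : Set Ω} {y G : Ω → ℝ}

theorem condExp_indicator_eq_mul_condExp_indicator_one (hm : m ≤ mΩ) (hT : MeasurableSet T)
    (hy : Integrable y μ) (hG : Integrable G μ) (hGm : StronglyMeasurable[m] G)
    (hGy : ∀ s, MeasurableSet[m] s → ∫ ω in s ∩ T, y ω ∂μ = ∫ ω in s ∩ T, G ω ∂μ) :
    μ[T.indicator y | m] =ᵐ[μ] G * μ[T.indicator 1 | m] := by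
  have hGT : T.indicator G = G * T.indicator 1 := by
    funext ω
    by_cases hω : ω ∈ T <;> simp [hω]
  have hsame : μ[T.indicator G | m] =ᵐ[μ] μ[T.indicator y | m] := by
    refine ae_eq_condExp_of_forall_setIntegral_eq hm (hy.indicator hT)
      (fun s _ _ => integrable_condExp.integrableOn) (fun s hs _ => ?_)
      stronglyMeasurable_condExp.aestronglyMeasurable
    rw [setIntegral_condExp hm (hG.indicator hT) hs, setIntegral_indicator hT,
      setIntegral_indicator hT, hGy s hs]
  have hT1 : Integrable (T.indicator (1 : Ω → ℝ)) μ := (integrable_const 1).indicator hT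
  refine hsame.symm.trans ?_
  rw [hGT]
  exact condExp_mul_of_stronglyMeasurable_left hGm (hGT ▸ hG.indicator hT) hT1

theorem integral_indicator_div_eq_integral_of_setIntegral_inter_eq (hm : m ≤ mΩ)
    (hT : MeasurableSet T) (hy : Integrable y μ) (hG : Integrable G μ)
    (hGm : StronglyMeasurable[m] G)
    (hGy : ∀ s, MeasurableSet[m] s → ∫ ω in s ∩ T, y ω ∂μ = ∫ ω in s ∩ T, G ω ∂μ)
    {e : Ω → ℝ} (he : e =ᵐ[μ] μ[T.indicator (1 : Ω → ℝ) | m]) (he0 : ∀ᵐ ω ∂μ, e ω ≠ 0)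
    (hint : Integrable (fun ω => T.indicator y ω / e ω) μ) :
    ∫ ω, T.indicator y ω / e ω ∂μ = ∫ ω, G ω ∂μ := by
  set p := μ[T.indicator (1 : Ω → ℝ) | m]
  have hdiv : (fun ω => T.indicator y ω / e ω) =ᵐ[μ] p⁻¹ * T.indicator y := by
    filter_upwards [he] with ω hω
    simp [hω, div_eq_inv_mul]
  have hp : StronglyMeasurable[m] p⁻¹ :=
    stronglyMeasurable_condExp.measurable.inv.stronglyMeasurable
  calc ∫ ω, T.indicator y ω / e ω ∂μ
      = ∫ ω, (p⁻¹ * T.indicator y) ω ∂μ := integral_congr_ae hdiv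
    _ = ∫ ω, (p⁻¹ * μ[T.indicator y | m]) ω ∂μ :=
      integral_mul_condExp_of_stronglyMeasurable_left hm hp (hint.congr hdiv) (hy.indicator hT)
    _ = ∫ ω, G ω ∂μ := by
      refine integral_congr_ae ?_
      filter_upwards [condExp_indicator_eq_mul_condExp_indicator_one hm hT hy hG hGm hGy, he,
        he0] with ω hyG heω he0ω
      rw [Pi.mul_apply, hyG, Pi.mul_apply, Pi.inv_apply, mul_comm]
      exact mul_inv_cancel_right₀ (heω.symm.trans_ne he0ω) (G ω)

end ConditionalExpectation

theorem stmt3_general {Ω 𝒳 : Type*} {mΩ : MeasurableSpace Ω}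
    [MeasurableSpace 𝒳]
    (μ : Measure Ω) [IsProbabilityMeasure μ]
    (t y : Ω → ℝ) (x : Ω → 𝒳)
    (ht : Measurable t) (hx : Measurable x)
    (hbin : ∀ ω, t ω = 0 ∨ t ω = 1)
    (hyint : Integrable y μ)
    (e : Ω → ℝ)
    (he : e =ᵐ[μ] μ[t | MeasurableSpace.comap x inferInstance])
    (hoverlap : ∀ᵐ ω ∂μ, 0 < e ω ∧ e ω < 1)
    (g : 𝒳 → ℝ) (hg : Measurable g)
    -- `g ∘ x` is a version of `E[y | x, t = 1]`:
    (hgver : ∀ A : Set 𝒳, MeasurableSet A →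
      ∫ ω in x ⁻¹' A ∩ {ω | t ω = 1}, y ω ∂μ =
        ∫ ω in x ⁻¹' A ∩ {ω | t ω = 1}, g (x ω) ∂μ)
    (hint1 : Integrable (fun ω => y ω * t ω / e ω) μ)
    (hint2 : Integrable (fun ω => g (x ω)) μ) :
    ∫ ω, y ω * t ω / e ω ∂μ = ∫ ω, g (x ω) ∂μ := by
  set T := {ω | t ω = 1}
  have htT : t = T.indicator 1 := eq_indicator_one_of_eq_zero_or_eq_one hbin
  have hytT : (fun ω => y ω * t ω / e ω) = fun ω => T.indicator y ω / e ω := by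
    funext ω
    rw [htT, ← Set.indicator_mul_right]
    simp only [Pi.one_apply, mul_one]
  rw [hytT] at hint1 ⊢
  rw [htT] at he
  refine integral_indicator_div_eq_integral_of_setIntegral_inter_eq hx.comap_le
    (ht (measurableSet_singleton 1)) hyint hint2
    (hg.comp (comap_measurable x)).stronglyMeasurable ?_ he
    (hoverlap.mono fun ω h => h.1.ne') hint1
  rintro s ⟨A, hA, rfl⟩
  exact hgver A hA

/-- IPW identification.  With binary treatment `t`, covariates `x`, propensity
score `e` a version of `E[t | x]` with `0 < e < 1` a.s., and `y ⊥ t | x`, the inverse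
probability weighted estimator recovers the mean of `E[y | x, t = 1]`:
`E[y·t/e(x)] = E[g(x)]` where `g(x)` is a version of `E[y | x, t = 1]`. -/
theorem stmt3 {Ω 𝒳 : Type*} {mΩ : MeasurableSpace Ω} [StandardBorelSpace Ω] [Nonempty Ω]
    [MeasurableSpace 𝒳]
    (μ : Measure Ω) [IsProbabilityMeasure μ]
    (t y : Ω → ℝ) (x : Ω → 𝒳)
    (ht : Measurable t) (hy : Measurable y) (hx : Measurable x)
    (hbin : ∀ ω, t ω = 0 ∨ t ω = 1)
    (hyint : Integrable y μ)
    (e : Ω → ℝ)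
    (he : e =ᵐ[μ] μ[t | MeasurableSpace.comap x inferInstance])
    (hoverlap : ∀ᵐ ω ∂μ, 0 < e ω ∧ e ω < 1)
    (hunconf : CondIndepFun (MeasurableSpace.comap x inferInstance) hx.comap_le y t μ)
    (g : 𝒳 → ℝ) (hg : Measurable g)
    -- `g ∘ x` is a version of `E[y | x, t = 1]`:
    (hgver : ∀ A : Set 𝒳, MeasurableSet A →
      ∫ ω in x ⁻¹' A ∩ {ω | t ω = 1}, y ω ∂μ =
        ∫ ω in x ⁻¹' A ∩ {ω | t ω = 1}, g (x ω) ∂μ)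
    (hint1 : Integrable (fun ω => y ω * t ω / e ω) μ)
    (hint2 : Integrable (fun ω => g (x ω)) μ) :
    ∫ ω, y ω * t ω / e ω ∂μ = ∫ ω, g (x ω) ∂μ :=
  stmt3_general (mΩ := mΩ) μ t y x ht hx hbin hyint e he hoverlap g hg hgver hint1 hint2
end

section
/- Let s, ε, x, y be random variables with y independent of ε given (s, x). Let f be an injective measurable function and set m = f(s, ε). Suppose f̂ is another injective function such that f̂⁻¹ ∘ f is well-defined on the range of f; write (ŝ, ε̂) = f̂⁻¹(m). Then for all appropriate versions of conditional expectation, E[y | s, x] = E[y | s, ε, x] = E[y | m, x] = E[y | ŝ, ε̂, x] almost surely. In particular, the regression of y on the recovered latents (ŝ, ε̂) and covariates x equals the regression on the true latents s and x. -/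
/-! Given `(s, x)`, the regular conditional probability makes `y` and `ε` independent, so
`E[y · 1{ε ∈ C} | s, x] = E[y | s, x] · P(ε ∈ C | s, x)`. Hence `E[y | s, x]` has the same
integrals as `y` over the sets `{(s, x) ∈ B, ε ∈ C}`, which form a π-system generating
`σ(s, x, ε)`, and it is therefore also `E[y | s, ε, x]`. The remaining equalities hold because
`(s, ε, x)`, `(m, x)` and `(ŝ, ε̂, x)` are measurable functions of one another and so generate
the same σ-algebra. -/

open MeasureTheory ProbabilityTheory

theorem MeasurableSpace.comap_eq_comap_of_eq_comp {Ω α β : Type*} [MeasurableSpace α]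
    [MeasurableSpace β] {u : Ω → α} {v : Ω → β} {φ : β → α} {ψ : α → β} (hφ : Measurable φ)
    (hψ : Measurable ψ) (huv : u = φ ∘ v) (hvu : v = ψ ∘ u) :
    MeasurableSpace.comap u inferInstance = MeasurableSpace.comap v inferInstance :=
  le_antisymm (comap_le_comap_of_eq_comp φ hφ huv) (comap_le_comap_of_eq_comp ψ hψ hvu)

namespace MeasureTheory

theorem setIntegral_preimage_eq_of_isPiSystem {Ω γ E : Type*} {mΩ : MeasurableSpace Ω}
    {mγ : MeasurableSpace γ} [NormedAddCommGroup E] [NormedSpace ℝ E] [CompleteSpace E]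
    {μ : Measure Ω} {f g : Ω → E} (hf : Integrable f μ) (hg : Integrable g μ) {z : Ω → γ}
    (hz : Measurable z) {C : Set (Set γ)} (hgen : mγ = MeasurableSpace.generateFrom C)
    (hC : IsPiSystem C) (h_basic : ∀ t ∈ C, ∫ ω in z ⁻¹' t, f ω ∂μ = ∫ ω in z ⁻¹' t, g ω ∂μ)
    (h_univ : ∫ ω, f ω ∂μ = ∫ ω, g ω ∂μ) {t : Set γ} (ht : MeasurableSet t) :
    ∫ ω in z ⁻¹' t, f ω ∂μ = ∫ ω in z ⁻¹' t, g ω ∂μ := by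
  have h_map {u : Ω → E} (hu : Integrable u μ) {t : Set γ} (ht : MeasurableSet t) :
      (μ.withDensityᵥ u).map z t = ∫ ω in z ⁻¹' t, u ω ∂μ := by
    rw [VectorMeasure.map_apply _ hz ht, withDensityᵥ_apply hu (hz ht)]
  have h_eq : (μ.withDensityᵥ f).map z = (μ.withDensityᵥ g).map z := by
    refine VectorMeasure.ext_of_generateFrom C (fun t ht ↦ ?_) hgen hC ?_
    · have ht' : MeasurableSet t := hgen ▸ MeasurableSpace.measurableSet_generateFrom ht
      rw [h_map hf ht', h_map hg ht', h_basic t ht]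
    · simpa [h_map hf MeasurableSet.univ, h_map hg MeasurableSet.univ] using h_univ
  rw [← h_map hf ht, ← h_map hg ht, h_eq]

end MeasureTheory

namespace ProbabilityTheory

variable {Ω : Type*} {m' mΩ : MeasurableSpace Ω} [StandardBorelSpace Ω] {hm' : m' ≤ mΩ}
  {μ : Measure Ω} [IsFiniteMeasure μ]

theorem CondIndepFun.condExp_mul_ae_eq {X Y : Ω → ℝ} (h : CondIndepFun m' hm' X Y μ)
    (hX : Measurable X) (hY : Measurable Y) (hXi : Integrable X μ) (hYi : Integrable Y μ)
    (hXYi : Integrable (X * Y) μ) :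
    μ[X * Y | m'] =ᵐ[μ] μ[X | m'] * μ[Y | m'] := by
  have h_indep : ∀ᵐ ω ∂μ, IndepFun X Y (condExpKernel μ m' ω) := by
    refine ae_of_ae_trim hm' ?_
    filter_upwards [(condIndepFun_iff_map_prod_eq_prod_map_map hX hY).mp h] with ω hω
    rw [indepFun_iff_map_prod_eq_prod_map_map hX.aemeasurable hY.aemeasurable]
    simpa only [Kernel.map_apply _ (hX.prodMk hY), Kernel.prod_apply,
      Kernel.map_apply _ hX, Kernel.map_apply _ hY] using hω
  filter_upwards [h_indep, condExp_ae_eq_integral_condExpKernel hm' hXYi,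
    condExp_ae_eq_integral_condExpKernel hm' hXi,
    condExp_ae_eq_integral_condExpKernel hm' hYi] with ω hω hXY hX' hY'
  rw [Pi.mul_apply, hXY, hX', hY']
  exact hω.integral_fun_mul_eq_mul_integral hX.aestronglyMeasurable hY.aestronglyMeasurable

theorem CondIndepFun.setIntegral_inter_preimage_condExp {E : Type*} [MeasurableSpace E]
    {y : Ω → ℝ} {ε : Ω → E} (h : CondIndepFun m' hm' y ε μ) (hy : Measurable y)
    (hε : Measurable ε) (hyi : Integrable y μ) {A : Set Ω} (hA : MeasurableSet[m'] A)
    {C : Set E} (hC : MeasurableSet C) :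
    ∫ ω in A ∩ ε ⁻¹' C, (μ[y | m']) ω ∂μ = ∫ ω in A ∩ ε ⁻¹' C, y ω ∂μ := by
  set Z : Ω → ℝ := (ε ⁻¹' C).indicator 1
  have hεC : MeasurableSet (ε ⁻¹' C) := hε hC
  have hZ : Measurable Z := (measurable_one.indicator hC).comp hε
  have hZi : Integrable Z μ := (integrable_const 1).indicator hεC
  have hmul : ∀ u : Ω → ℝ, u * Z = (ε ⁻¹' C).indicator u := fun u ↦ by
    ext ω; by_cases hω : ω ∈ ε ⁻¹' C <;> simp [Z, hω]
  have hyZi : Integrable (y * Z) μ := by rw [hmul]; exact hyi.indicator hεC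
  have hcZi : Integrable (μ[y | m'] * Z) μ := by rw [hmul]; exact integrable_condExp.indicator hεC
  have hyZ_indep : CondIndepFun m' hm' y Z μ := h.comp measurable_id (measurable_one.indicator hC)
  have hyZ : μ[y * Z | m'] =ᵐ[μ] μ[y | m'] * μ[Z | m'] :=
    hyZ_indep.condExp_mul_ae_eq hy hZ hyi hZi hyZi
  have hpull : μ[μ[y | m'] * Z | m'] =ᵐ[μ] μ[y | m'] * μ[Z | m'] :=
    condExp_mul_of_stronglyMeasurable_left stronglyMeasurable_condExp hcZi hZi
  calc ∫ ω in A ∩ ε ⁻¹' C, (μ[y | m']) ω ∂μ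
      = ∫ ω in A, (μ[y | m'] * Z) ω ∂μ := by rw [hmul, setIntegral_indicator hεC]
    _ = ∫ ω in A, (μ[μ[y | m'] * Z | m']) ω ∂μ :=
      (setIntegral_condExp hm' hcZi hA).symm
    _ = ∫ ω in A, (μ[y * Z | m']) ω ∂μ :=
      setIntegral_congr_ae (hm' A hA) ((hpull.trans hyZ.symm).mono fun _ h _ ↦ h)
    _ = ∫ ω in A ∩ ε ⁻¹' C, y ω ∂μ := by
      rw [setIntegral_condExp hm' hyZi hA, hmul, setIntegral_indicator hεC]

theorem CondIndepFun.condExp_prodMk_ae_eq {K E : Type*} {mK : MeasurableSpace K}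
    [MeasurableSpace E] {k : Ω → K} (hk : Measurable k) {y : Ω → ℝ} {ε : Ω → E}
    (h : CondIndepFun (mK.comap k) hk.comap_le y ε μ) (hy : Measurable y) (hε : Measurable ε)
    (hyi : Integrable y μ) :
    μ[y | (mK.prod inferInstance).comap fun ω ↦ (k ω, ε ω)] =ᵐ[μ] μ[y | mK.comap k] := by
  have hkε : Measurable fun ω ↦ (k ω, ε ω) := hk.prodMk hε
  have hle : mK.comap k ≤ (mK.prod inferInstance).comap fun ω ↦ (k ω, ε ω) := by
    rw [MeasurableSpace.comap_prodMk]; exact le_sup_left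
  refine (ae_eq_condExp_of_forall_setIntegral_eq hkε.comap_le hyi
    (fun _ _ _ ↦ integrable_condExp.integrableOn) ?_
    (stronglyMeasurable_condExp.mono hle).aestronglyMeasurable).symm
  rintro _ ⟨D, hD, rfl⟩ -
  refine setIntegral_preimage_eq_of_isPiSystem integrable_condExp hyi hkε
    generateFrom_prod.symm isPiSystem_prod ?_ (integral_condExp hk.comap_le) hD
  rintro _ ⟨B, hB, C, hC, rfl⟩
  rw [Set.mk_preimage_prod]
  exact h.setIntegral_inter_preimage_condExp hy hε hyi ⟨B, hB, rfl⟩ hC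

end ProbabilityTheory

theorem stmt4_general {Ω S E X S' E' M : Type*}
    {mΩ : MeasurableSpace Ω} [StandardBorelSpace Ω]
    [MeasurableSpace S] [MeasurableSpace E] [MeasurableSpace X]
    [MeasurableSpace S'] [MeasurableSpace E'] [MeasurableSpace M]
    (μ : Measure Ω) [IsProbabilityMeasure μ]
    (s : Ω → S) (ε : Ω → E) (x : Ω → X) (y : Ω → ℝ)
    (hs : Measurable s) (hε : Measurable ε) (hx : Measurable x) (hy : Measurable y)
    (hyint : Integrable y μ)
    (f : S × E → M) (hf : Measurable f)
    (g : M → S × E) (hg : Measurable g) (hgf : ∀ p, g (f p) = p)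
    (fhat : S' × E' → M) (hfhat : Measurable fhat)
    (fhinv : M → S' × E') (hfhinv : Measurable fhinv)
    (hleft : ∀ p : S × E, fhat (fhinv (f p)) = f p)
    (m : Ω → M) (hm : ∀ ω, m ω = f (s ω, ε ω))
    (shat : Ω → S') (εhat : Ω → E') (hse : ∀ ω, (shat ω, εhat ω) = fhinv (m ω))
    (hci : CondIndepFun (MeasurableSpace.comap (fun ω => (s ω, x ω)) inferInstance)
      ((hs.prodMk hx).comap_le) y ε μ) :
    (μ[y | MeasurableSpace.comap (fun ω => (s ω, x ω)) inferInstance]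
      =ᵐ[μ] μ[y | MeasurableSpace.comap (fun ω => (s ω, ε ω, x ω)) inferInstance]) ∧
    (μ[y | MeasurableSpace.comap (fun ω => (s ω, ε ω, x ω)) inferInstance]
      =ᵐ[μ] μ[y | MeasurableSpace.comap (fun ω => (m ω, x ω)) inferInstance]) ∧
    (μ[y | MeasurableSpace.comap (fun ω => (m ω, x ω)) inferInstance]
      =ᵐ[μ] μ[y | MeasurableSpace.comap (fun ω => (shat ω, εhat ω, x ω)) inferInstance]) := by
  have e₁ : MeasurableSpace.comap (fun ω ↦ (s ω, ε ω, x ω)) inferInstance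
      = MeasurableSpace.comap (fun ω ↦ ((s ω, x ω), ε ω)) inferInstance :=
    MeasurableSpace.comap_eq_comap_of_eq_comp (φ := fun p ↦ (p.1.1, p.2, p.1.2))
      (ψ := fun p ↦ ((p.1, p.2.2), p.2.1)) (by fun_prop) (by fun_prop) rfl rfl
  have e₂ : MeasurableSpace.comap (fun ω ↦ (s ω, ε ω, x ω)) inferInstance
      = MeasurableSpace.comap (fun ω ↦ (m ω, x ω)) inferInstance :=
    MeasurableSpace.comap_eq_comap_of_eq_comp (φ := fun p ↦ ((g p.1).1, (g p.1).2, p.2))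
      (ψ := fun p ↦ (f (p.1, p.2.1), p.2.2)) (by fun_prop) (by fun_prop)
      (funext fun ω ↦ by simp [hm, hgf]) (funext fun ω ↦ by simp [hm])
  have e₃ : MeasurableSpace.comap (fun ω ↦ (m ω, x ω)) inferInstance
      = MeasurableSpace.comap (fun ω ↦ (shat ω, εhat ω, x ω)) inferInstance :=
    MeasurableSpace.comap_eq_comap_of_eq_comp (φ := fun p ↦ (fhat (p.1, p.2.1), p.2.2))
      (ψ := fun p ↦ ((fhinv p.1).1, (fhinv p.1).2, p.2)) (by fun_prop) (by fun_prop)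
      (funext fun ω ↦ by simp only [Function.comp_apply, hse, hm, hleft])
      (funext fun ω ↦ by simp [← hse])
  refine ⟨?_, by rw [e₂], by rw [e₃]⟩
  rw [e₁]
  exact (hci.condExp_prodMk_ae_eq (hs.prodMk hx) hy hε hyint).symm

/-- with `y ⊥ ε | (s, x)`, `m = f(s, ε)` for injective `f` (with measurable left
inverse), and recovered latents `(ŝ, ε̂) = f̂⁻¹(m)` for an injective `f̂` with measurable
inverse satisfying `f̂(f̂⁻¹(f p)) = f p`, the conditional expectations coincide:
`E[y | s, x] = E[y | s, ε, x] = E[y | m, x] = E[y | ŝ, ε̂, x]` a.s. -/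
theorem stmt4 {Ω S E X S' E' M : Type*}
    {mΩ : MeasurableSpace Ω} [StandardBorelSpace Ω] [Nonempty Ω]
    [MeasurableSpace S] [MeasurableSpace E] [MeasurableSpace X]
    [MeasurableSpace S'] [MeasurableSpace E'] [MeasurableSpace M]
    (μ : Measure Ω) [IsProbabilityMeasure μ]
    (s : Ω → S) (ε : Ω → E) (x : Ω → X) (y : Ω → ℝ)
    (hs : Measurable s) (hε : Measurable ε) (hx : Measurable x) (hy : Measurable y)
    (hyint : Integrable y μ)
    (f : S × E → M) (hf : Measurable f) (hfinj : Function.Injective f)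
    (g : M → S × E) (hg : Measurable g) (hgf : ∀ p, g (f p) = p)
    (fhat : S' × E' → M) (hfhat : Measurable fhat) (hfhatinj : Function.Injective fhat)
    (fhinv : M → S' × E') (hfhinv : Measurable fhinv)
    (hleft : ∀ p : S × E, fhat (fhinv (f p)) = f p)
    (m : Ω → M) (hm : ∀ ω, m ω = f (s ω, ε ω))
    (shat : Ω → S') (εhat : Ω → E') (hse : ∀ ω, (shat ω, εhat ω) = fhinv (m ω))
    (hci : CondIndepFun (MeasurableSpace.comap (fun ω => (s ω, x ω)) inferInstance)
      ((hs.prodMk hx).comap_le) y ε μ) :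
    (μ[y | MeasurableSpace.comap (fun ω => (s ω, x ω)) inferInstance]
      =ᵐ[μ] μ[y | MeasurableSpace.comap (fun ω => (s ω, ε ω, x ω)) inferInstance]) ∧
    (μ[y | MeasurableSpace.comap (fun ω => (s ω, ε ω, x ω)) inferInstance]
      =ᵐ[μ] μ[y | MeasurableSpace.comap (fun ω => (m ω, x ω)) inferInstance]) ∧
    (μ[y | MeasurableSpace.comap (fun ω => (m ω, x ω)) inferInstance]
      =ᵐ[μ] μ[y | MeasurableSpace.comap (fun ω => (shat ω, εhat ω, x ω)) inferInstance]) :=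
  stmt4_general (mΩ := mΩ) μ s ε x y hs hε hx hy hyint f hf g hg hgf fhat hfhat fhinv hfhinv hleft m
    hm shat εhat hse hci
end

section
/- Let (y, s, x, t) be random variables with t ∈ {0,1}, propensity e(x) = E[t | x] satisfying 0 < e(x) < 1 a.s., potential outcomes y(0), y(1) with y = t·y(1) + (1−t)·y(0), unconfoundedness (y(0), y(1)) ⊥ t | x, and surrogacy y ⊥ t | (s, x). Define h(s, x) = E[y | s, x]. Then E[y(1) − y(0)] = E[h(s, x) · t / e(x) − h(s, x) · (1−t)/(1−e(x))]. -/
/-!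
Condition the treated term `h t / e` first on `(s, x)`, then on `x`. Given `(s, x)` the weight
`h / e` is known, and surrogacy factorises `E[y t | s, x] = h · E[t | s, x]`; since `y t = y(1) t`,
the conditional expectation of `h t / e` is `E[y(1) t | s, x] / e`. Conditioning on `x` and using
unconfoundedness turns this into `E[y(1) | x] · e / e = E[y(1) | x]`. The control term is the same
argument with `1 - t`, `1 - e` and `y(0)`.

Both factorisations rest on `P(T | m' ⊔ m₁) = P(T | m')` for `T` conditionally independent of `m₁`
given `m'`, which is checked on the π-system of intersections `a ∩ b`, `a ∈ m'`, `b ∈ m₁`.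
-/

open MeasureTheory ProbabilityTheory

theorem IsPiSystem.image2_inter {Ω : Type*} {S T : Set (Set Ω)} (hS : IsPiSystem S)
    (hT : IsPiSystem T) : IsPiSystem (Set.image2 (· ∩ ·) S T) := by
  rintro _ ⟨a₁, ha₁, b₁, hb₁, rfl⟩ _ ⟨a₂, ha₂, b₂, hb₂, rfl⟩ hne
  refine ⟨a₁ ∩ a₂, hS _ ha₁ _ ha₂ ?_, b₁ ∩ b₂, hT _ hb₁ _ hb₂ ?_, Set.inter_inter_inter_comm ..⟩
  · exact hne.mono (by gcongr <;> exact Set.inter_subset_left)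
  · exact hne.mono (by gcongr <;> exact Set.inter_subset_right)

theorem MeasurableSpace.sup_eq_generateFrom_image2_inter {Ω : Type*} (m₁ m₂ : MeasurableSpace Ω) :
    m₁ ⊔ m₂ = generateFrom
      (Set.image2 (· ∩ ·) {s | MeasurableSet[m₁] s} {s | MeasurableSet[m₂] s}) := by
  refine le_antisymm (sup_le ?_ ?_) (generateFrom_le ?_)
  · exact fun a ha => measurableSet_generateFrom ⟨a, ha, Set.univ, .univ, Set.inter_univ a⟩
  · exact fun b hb => measurableSet_generateFrom ⟨Set.univ, .univ, b, hb, Set.univ_inter b⟩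
  · rintro _ ⟨a, ha, b, hb, rfl⟩
    exact (le_sup_left (b := m₂) a ha).inter (le_sup_right (a := m₁) b hb)

theorem indicator_preimage_one_eq_of_forall_eq_zero_or_one {Ω : Type*} {τ : Ω → ℝ}
    (hτ : ∀ ω, τ ω = 0 ∨ τ ω = 1) : (τ ⁻¹' {1}).indicator (fun _ => 1) = τ := by
  ext ω
  rcases hτ ω with h | h <;> simp [Set.indicator, h]

namespace MeasureTheory

variable {Ω : Type*} {m m₀ : MeasurableSpace Ω} {μ : Measure Ω}

theorem setIntegral_eq_of_isPiSystem {E : Type*} [NormedAddCommGroup E] [NormedSpace ℝ E]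
    (hm : m ≤ m₀) {P : Set (Set Ω)} (h_gen : m = MeasurableSpace.generateFrom P)
    (hP : IsPiSystem P) {f g : Ω → E} (hf : Integrable f μ) (hg : Integrable g μ)
    (h_basic : ∀ u ∈ P, ∫ ω in u, f ω ∂μ = ∫ ω in u, g ω ∂μ)
    (h_univ : ∫ ω, f ω ∂μ = ∫ ω, g ω ∂μ) {u : Set Ω} (hu : MeasurableSet[m] u) :
    ∫ ω in u, f ω ∂μ = ∫ ω in u, g ω ∂μ := by
  induction u, hu using MeasurableSpace.induction_on_inter h_gen hP with
  | empty => simp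
  | basic u hu => exact h_basic u hu
  | compl u hu h_eq =>
    rw [setIntegral_compl (hm u hu) hf, setIntegral_compl (hm u hu) hg, h_eq, h_univ]
  | iUnion u h_disj hu h_eq =>
    rw [integral_iUnion (fun i => hm _ (hu i)) h_disj hf.integrableOn,
      integral_iUnion (fun i => hm _ (hu i)) h_disj hg.integrableOn]
    exact tsum_congr h_eq

theorem ae_eq_condExp_of_isPiSystem {E : Type*} [NormedAddCommGroup E] [NormedSpace ℝ E]
    [CompleteSpace E] (hm : m ≤ m₀) [SigmaFinite (μ.trim hm)] {P : Set (Set Ω)}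
    (h_gen : m = MeasurableSpace.generateFrom P) (hP : IsPiSystem P) {f g : Ω → E}
    (hf : Integrable f μ) (hg : Integrable g μ) (hgm : AEStronglyMeasurable[m] g μ)
    (h_basic : ∀ u ∈ P, ∫ ω in u, g ω ∂μ = ∫ ω in u, f ω ∂μ)
    (h_univ : ∫ ω, g ω ∂μ = ∫ ω, f ω ∂μ) :
    g =ᵐ[μ] μ[f | m] :=
  ae_eq_condExp_of_forall_setIntegral_eq hm hf (fun _ _ _ => hg.integrableOn)
    (fun _ hu _ => setIntegral_eq_of_isPiSystem hm h_gen hP hg hf h_basic h_univ hu) hgm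

theorem one_sub_ae_eq_condExp_one_sub [IsFiniteMeasure μ] (hm : m ≤ m₀) {τ ε : Ω → ℝ}
    (hτ : Integrable τ μ) (hε : ε =ᵐ[μ] μ[τ | m]) :
    (fun ω => 1 - ε ω) =ᵐ[μ] μ[fun ω => 1 - τ ω | m] := by
  have hsub := condExp_sub (integrable_const 1) hτ (μ := μ) m
  rw [condExp_const hm] at hsub
  filter_upwards [hε, hsub] with ω hε hsub
  rw [hε]
  exact hsub.symm

theorem integrable_of_forall_eq_zero_or_one [IsFiniteMeasure μ] {τ : Ω → ℝ}
    (hτ : Measurable τ) (hτ01 : ∀ ω, τ ω = 0 ∨ τ ω = 1) : Integrable τ μ := by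
  rw [← indicator_preimage_one_eq_of_forall_eq_zero_or_one hτ01]
  exact (integrable_const 1).indicator (hτ (measurableSet_singleton 1))

theorem Integrable.mul_of_forall_eq_zero_or_one {w τ : Ω → ℝ} (hw : Integrable w μ)
    (hτ : Measurable τ) (hτ01 : ∀ ω, τ ω = 0 ∨ τ ω = 1) : Integrable (w * τ) μ :=
  hw.mul_bdd (c := 1) hτ.aestronglyMeasurable
    (.of_forall fun ω => by rcases hτ01 ω with h | h <;> simp [h])

end MeasureTheory

namespace ProbabilityTheory

variable {Ω : Type*} {m' m₁ m₂ G H mΩ : MeasurableSpace Ω} [StandardBorelSpace Ω]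
  {μ : Measure Ω} [IsFiniteMeasure μ]

section CondIndep

variable {hm' : m' ≤ mΩ}

theorem CondIndep.condExp_indicator_sup_ae_eq (h : CondIndep m' m₁ m₂ hm' μ) (hm₁ : m₁ ≤ mΩ)
    (hm₂ : m₂ ≤ mΩ) {T : Set Ω} (hT : MeasurableSet[m₂] T) :
    μ⟦T | m' ⊔ m₁⟧ =ᵐ[μ] μ⟦T | m'⟧ := by
  have hT₀ : MeasurableSet T := hm₂ T hT
  have hTint : Integrable (T.indicator fun _ => (1 : ℝ)) μ := (integrable_const 1).indicator hT₀
  refine (ae_eq_condExp_of_isPiSystem (sup_le hm' hm₁)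
    (MeasurableSpace.sup_eq_generateFrom_image2_inter m' m₁)
    ((@MeasurableSpace.isPiSystem_measurableSet Ω m').image2_inter
      (@MeasurableSpace.isPiSystem_measurableSet Ω m₁)) hTint integrable_condExp
    (stronglyMeasurable_condExp.mono (le_sup_left : m' ≤ m' ⊔ m₁)).aestronglyMeasurable ?_
    (integral_condExp hm')).symm
  rintro _ ⟨a, ha, b, hb, rfl⟩
  have hb₀ : MeasurableSet b := hm₁ b hb
  have hprod : μ⟦b | m'⟧ * μ⟦T | m'⟧ =ᵐ[μ] μ⟦b ∩ T | m'⟧ :=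
    ((condIndep_iff m' m₁ m₂ hm' hm₁ hm₂ μ).mp h b T hb hT).symm
  have hb_mul : (b.indicator fun _ => (1 : ℝ)) * μ⟦T | m'⟧ = b.indicator (μ⟦T | m'⟧) := by
    ext ω
    by_cases hω : ω ∈ b <;> simp [hω]
  have hint : Integrable ((b.indicator fun _ => (1 : ℝ)) * μ⟦T | m'⟧) μ :=
    hb_mul ▸ integrable_condExp.indicator hb₀
  have hpull : μ[(b.indicator fun _ => (1 : ℝ)) * μ⟦T | m'⟧ | m'] =ᵐ[μ] μ⟦b | m'⟧ * μ⟦T | m'⟧ :=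
    condExp_mul_of_stronglyMeasurable_right stronglyMeasurable_condExp hint
      ((integrable_const 1).indicator hb₀)
  calc ∫ ω in a ∩ b, (μ⟦T | m'⟧) ω ∂μ
      = ∫ ω in a, ((b.indicator fun _ => (1 : ℝ)) * μ⟦T | m'⟧) ω ∂μ := by
        rw [hb_mul, setIntegral_indicator hb₀]
    _ = ∫ ω in a, (μ⟦b ∩ T | m'⟧) ω ∂μ := by
        rw [← setIntegral_condExp hm' hint ha]
        exact setIntegral_congr_ae (hm' a ha) ((hpull.trans hprod).mono fun ω hω _ => hω)
    _ = ∫ ω in a ∩ b, T.indicator (fun _ => (1 : ℝ)) ω ∂μ := by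
        rw [setIntegral_condExp hm' ((integrable_const 1).indicator (hb₀.inter hT₀)) ha,
          ← setIntegral_indicator hb₀, Set.indicator_indicator]

theorem CondIndep.condExp_mul_indicator_ae_eq (h : CondIndep m' m₁ m₂ hm' μ) (hm₁ : m₁ ≤ mΩ)
    (hm₂ : m₂ ≤ mΩ) {f : Ω → ℝ} (hf : StronglyMeasurable[m₁] f) (hfi : Integrable f μ)
    {T : Set Ω} (hT : MeasurableSet[m₂] T) :
    μ[f * T.indicator (fun _ => 1) | m'] =ᵐ[μ] μ[f | m'] * μ⟦T | m'⟧ := by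
  have hT₀ : MeasurableSet T := hm₂ T hT
  have hfT : Integrable (f * T.indicator fun _ => (1 : ℝ)) μ := by
    refine (hfi.indicator hT₀).congr (.of_forall fun ω => ?_)
    by_cases hω : ω ∈ T <;> simp [hω]
  have hsup : μ[f * T.indicator (fun _ => 1) | m' ⊔ m₁] =ᵐ[μ] f * μ⟦T | m'⟧ :=
    (condExp_mul_of_stronglyMeasurable_left (hf.mono (le_sup_right : m₁ ≤ m' ⊔ m₁)) hfT
      ((integrable_const 1).indicator hT₀)).trans
      (Filter.EventuallyEq.rfl.mul (h.condExp_indicator_sup_ae_eq hm₁ hm₂ hT))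
  calc μ[f * T.indicator (fun _ => 1) | m']
      =ᵐ[μ] μ[μ[f * T.indicator (fun _ => 1) | m' ⊔ m₁] | m'] :=
        (condExp_condExp_of_le le_sup_left (sup_le hm' hm₁)).symm
    _ =ᵐ[μ] μ[f * μ⟦T | m'⟧ | m'] := condExp_congr_ae hsup
    _ =ᵐ[μ] μ[f | m'] * μ⟦T | m'⟧ :=
        condExp_mul_of_stronglyMeasurable_right stronglyMeasurable_condExp
          (integrable_condExp.congr hsup) hfi

theorem CondIndepFun.condExp_mul_ae_eq_of_forall_eq_zero_or_one {f τ : Ω → ℝ}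
    (h : CondIndepFun m' hm' f τ μ) (hf : Measurable f) (hτ : Measurable τ)
    (hτ01 : ∀ ω, τ ω = 0 ∨ τ ω = 1) (hfi : Integrable f μ) :
    μ[f * τ | m'] =ᵐ[μ] μ[f | m'] * μ[τ | m'] := by
  rw [← indicator_preimage_one_eq_of_forall_eq_zero_or_one hτ01]
  exact ((condIndepFun_iff_condIndep m' hm' f τ μ).mp h).condExp_mul_indicator_ae_eq hf.comap_le
    hτ.comap_le (comap_measurable f).stronglyMeasurable hfi ⟨{1}, measurableSet_singleton 1, rfl⟩

end CondIndep

theorem integral_mul_div_eq_integral_of_condIndepFun (hG : G ≤ mΩ) (hH : H ≤ mΩ) (hGH : G ≤ H)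
    {y Y τ ρ ε : Ω → ℝ} (hy : Measurable y) (hY : Measurable Y) (hτ : Measurable τ)
    (hτ01 : ∀ ω, τ ω = 0 ∨ τ ω = 1)
    (hyτ : CondIndepFun H hH y τ μ) (hYτ : CondIndepFun G hG Y τ μ) (hyY : y * τ = Y * τ)
    (hρ : ρ =ᵐ[μ] μ[y | H]) (hε : ε =ᵐ[μ] μ[τ | G]) (hε0 : ∀ᵐ ω ∂μ, ε ω ≠ 0)
    (hyi : Integrable y μ) (hYi : Integrable Y μ)
    (hint : Integrable (fun ω => ρ ω * τ ω / ε ω) μ) :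
    ∫ ω, ρ ω * τ ω / ε ω ∂μ = ∫ ω, Y ω ∂μ := by
  have hτi : Integrable τ μ := integrable_of_forall_eq_zero_or_one hτ hτ01
  have hρH : AEStronglyMeasurable[H] ρ μ := ⟨_, stronglyMeasurable_condExp, hρ⟩
  have hεG : AEStronglyMeasurable[G] ε μ := ⟨_, stronglyMeasurable_condExp, hε⟩
  have hw : (fun ω => ρ ω * τ ω / ε ω) = ρ / ε * τ := by
    ext ω
    simp [div_mul_eq_mul_div]
  have hH_step : μ[fun ω => ρ ω * τ ω / ε ω | H] =ᵐ[μ] μ[Y * τ | H] / ε := by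
    rw [hw]
    calc μ[ρ / ε * τ | H]
        =ᵐ[μ] ρ / ε * μ[τ | H] :=
          condExp_mul_of_aestronglyMeasurable_left (hρH.div₀ (hεG.mono hGH)) (hw ▸ hint) hτi
      _ =ᵐ[μ] μ[y | H] * μ[τ | H] / ε := by
          filter_upwards [hρ] with ω h
          simp only [Pi.mul_apply, Pi.div_apply, h]
          ring
      _ =ᵐ[μ] μ[y * τ | H] / ε :=
          (hyτ.condExp_mul_ae_eq_of_forall_eq_zero_or_one hy hτ hτ01 hyi).symm.div .rfl
      _ = μ[Y * τ | H] / ε := by rw [hyY]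
  have hG_step : μ[μ[Y * τ | H] / ε | G] =ᵐ[μ] μ[Y | G] := by
    calc μ[μ[Y * τ | H] / ε | G]
        = μ[μ[Y * τ | H] * ε⁻¹ | G] := by rw [div_eq_mul_inv]
      _ =ᵐ[μ] μ[μ[Y * τ | H] | G] * ε⁻¹ :=
          condExp_mul_of_aestronglyMeasurable_right hεG.inv₀
            (div_eq_mul_inv (μ[Y * τ | H]) ε ▸ integrable_condExp.congr hH_step) integrable_condExp
      _ =ᵐ[μ] μ[Y * τ | G] * ε⁻¹ := (condExp_condExp_of_le hGH hH).mul .rfl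
      _ =ᵐ[μ] μ[Y | G] * μ[τ | G] * ε⁻¹ :=
          (hYτ.condExp_mul_ae_eq_of_forall_eq_zero_or_one hY hτ hτ01 hYi).mul .rfl
      _ =ᵐ[μ] μ[Y | G] := by
          filter_upwards [hε, hε0] with ω h h0
          simp [← h, h0]
  calc ∫ ω, ρ ω * τ ω / ε ω ∂μ
      = ∫ ω, (μ[fun ω => ρ ω * τ ω / ε ω | H]) ω ∂μ := (integral_condExp hH).symm
    _ = ∫ ω, (μ[Y * τ | H] / ε) ω ∂μ := integral_congr_ae hH_step
    _ = ∫ ω, (μ[μ[Y * τ | H] / ε | G]) ω ∂μ := (integral_condExp hG).symm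
    _ = ∫ ω, (μ[Y | G]) ω ∂μ := integral_congr_ae hG_step
    _ = ∫ ω, Y ω ∂μ := integral_condExp hG

end ProbabilityTheory

theorem stmt5_general {Ω X S : Type*} {mΩ : MeasurableSpace Ω} [StandardBorelSpace Ω]
    [MeasurableSpace X] [MeasurableSpace S]
    (μ : Measure Ω) [IsProbabilityMeasure μ]
    (t y y0 y1 : Ω → ℝ) (x : Ω → X) (s : Ω → S)
    (ht : Measurable t) (hy : Measurable y) (hx : Measurable x) (hs : Measurable s)
    (hy0 : Measurable y0) (hy1 : Measurable y1)
    (hbin : ∀ ω, t ω = 0 ∨ t ω = 1)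
    (hobs : ∀ ω, y ω = t ω * y1 ω + (1 - t ω) * y0 ω)
    (e : Ω → ℝ)
    (he : e =ᵐ[μ] μ[t | MeasurableSpace.comap x inferInstance])
    (hoverlap : ∀ᵐ ω ∂μ, 0 < e ω ∧ e ω < 1)
    (hunconf : CondIndepFun (MeasurableSpace.comap x inferInstance) hx.comap_le
      (fun ω => (y0 ω, y1 ω)) t μ)
    (hsurr : CondIndepFun (MeasurableSpace.comap (fun ω => (s ω, x ω)) inferInstance)
      ((hs.prodMk hx).comap_le) y t μ)
    (h : S × X → ℝ)
    (hhver : (fun ω => h (s ω, x ω)) =ᵐ[μ]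
      μ[y | MeasurableSpace.comap (fun ω => (s ω, x ω)) inferInstance])
    (hint0 : Integrable y0 μ) (hint1 : Integrable y1 μ) (hinty : Integrable y μ)
    (hintw : Integrable (fun ω =>
      h (s ω, x ω) * t ω / e ω - h (s ω, x ω) * (1 - t ω) / (1 - e ω)) μ) :
    ∫ ω, (y1 ω - y0 ω) ∂μ =
      ∫ ω, (h (s ω, x ω) * t ω / e ω - h (s ω, x ω) * (1 - t ω) / (1 - e ω)) ∂μ := by
  have hGH : MeasurableSpace.comap x inferInstance ≤
      MeasurableSpace.comap (fun ω => (s ω, x ω)) inferInstance :=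
    (measurable_snd.comp (comap_measurable fun ω => (s ω, x ω))).comap_le
  have hbin' : ∀ ω, 1 - t ω = 0 ∨ 1 - t ω = 1 := fun ω => by
    rcases hbin ω with ht' | ht' <;> simp [ht']
  have he' := one_sub_ae_eq_condExp_one_sub hx.comap_le
    (integrable_of_forall_eq_zero_or_one ht hbin) he
  have hA : Integrable (fun ω => h (s ω, x ω) * t ω / e ω) μ :=
    (hintw.mul_of_forall_eq_zero_or_one ht hbin).congr (.of_forall fun ω => by
      rcases hbin ω with ht' | ht' <;> simp [ht'])
  have hB : Integrable (fun ω => h (s ω, x ω) * (1 - t ω) / (1 - e ω)) μ :=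
    (hintw.mul_of_forall_eq_zero_or_one (measurable_const.sub ht) hbin').neg.congr
      (.of_forall fun ω => by rcases hbin ω with ht' | ht' <;> simp [ht'])
  have h_treated : ∫ ω, h (s ω, x ω) * t ω / e ω ∂μ = ∫ ω, y1 ω ∂μ :=
    integral_mul_div_eq_integral_of_condIndepFun hx.comap_le (hs.prodMk hx).comap_le hGH hy hy1
      ht hbin hsurr (hunconf.comp measurable_snd measurable_id)
      (by ext ω; rcases hbin ω with ht' | ht' <;> simp [hobs, ht']) hhver he
      (hoverlap.mono fun _ hω => hω.1.ne') hinty hint1 hA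
  have h_control : ∫ ω, h (s ω, x ω) * (1 - t ω) / (1 - e ω) ∂μ = ∫ ω, y0 ω ∂μ :=
    integral_mul_div_eq_integral_of_condIndepFun hx.comap_le (hs.prodMk hx).comap_le hGH hy hy0
      (measurable_const.sub ht) hbin'
      (hsurr.comp measurable_id (measurable_const.sub measurable_id))
      (hunconf.comp measurable_fst (measurable_const.sub measurable_id))
      (by ext ω; rcases hbin ω with ht' | ht' <;> simp [hobs, ht']) hhver he'
      (hoverlap.mono fun _ hω => sub_ne_zero.mpr hω.2.ne') hinty hint0 hB
  rw [integral_sub hint1 hint0, integral_sub hA hB, h_treated, h_control]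

/-- long-term causal effect identification via surrogates: under overlap,
unconfoundedness, and surrogacy (`y ⊥ t | (s, x)`), with `h(s,x)` a version of `E[y | s, x]`,
the ATE satisfies `E[y(1) − y(0)] = E[h(s,x)·t/e(x) − h(s,x)·(1−t)/(1−e(x))]`. -/
theorem stmt5 {Ω X S : Type*} {mΩ : MeasurableSpace Ω} [StandardBorelSpace Ω] [Nonempty Ω]
    [MeasurableSpace X] [MeasurableSpace S]
    (μ : Measure Ω) [IsProbabilityMeasure μ]
    (t y y0 y1 : Ω → ℝ) (x : Ω → X) (s : Ω → S)
    (ht : Measurable t) (hy : Measurable y) (hx : Measurable x) (hs : Measurable s)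
    (hy0 : Measurable y0) (hy1 : Measurable y1)
    (hbin : ∀ ω, t ω = 0 ∨ t ω = 1)
    (hobs : ∀ ω, y ω = t ω * y1 ω + (1 - t ω) * y0 ω)
    (e : Ω → ℝ)
    (he : e =ᵐ[μ] μ[t | MeasurableSpace.comap x inferInstance])
    (hoverlap : ∀ᵐ ω ∂μ, 0 < e ω ∧ e ω < 1)
    (hunconf : CondIndepFun (MeasurableSpace.comap x inferInstance) hx.comap_le
      (fun ω => (y0 ω, y1 ω)) t μ)
    (hsurr : CondIndepFun (MeasurableSpace.comap (fun ω => (s ω, x ω)) inferInstance)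
      ((hs.prodMk hx).comap_le) y t μ)
    (h : S × X → ℝ) (hh : Measurable h)
    (hhver : (fun ω => h (s ω, x ω)) =ᵐ[μ]
      μ[y | MeasurableSpace.comap (fun ω => (s ω, x ω)) inferInstance])
    (hint0 : Integrable y0 μ) (hint1 : Integrable y1 μ) (hinty : Integrable y μ)
    (hintw : Integrable (fun ω =>
      h (s ω, x ω) * t ω / e ω - h (s ω, x ω) * (1 - t ω) / (1 - e ω)) μ) :
    ∫ ω, (y1 ω - y0 ω) ∂μ =
      ∫ ω, (h (s ω, x ω) * t ω / e ω - h (s ω, x ω) * (1 - t ω) / (1 - e ω)) ∂μ :=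
  stmt5_general (mΩ := mΩ) μ t y y0 y1 x s ht hy hx hs hy0 hy1 hbin hobs e he hoverlap hunconf hsurr
    h hhver hint0 hint1 hinty hintw
end

section
/- Suppose random variables satisfy: (i) comparability, p_obs(y | x, s) = p_exp(y | x, s) (the conditional law of y given (x, s) is the same under two measures P_obs and P_exp); and (ii) surrogacy under P_exp, y ⊥ t | (s, x). Then the conditional mean function h(s, x) = E_obs[y | s, x], learnable from observational data, satisfies E_exp[y | s, x, t] = h(s, x) P_exp-almost surely. -/
/-!
Surrogacy makes `t` irrelevant for predicting `y` once `(s, x)` is known: disintegrating `μexp`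
along `σ(s, x)`, `y` and `t` are independent under almost every conditional measure, so
`E[1{t ∈ C} y | s, x] = E[y | s, x] · P(t ∈ C | s, x)`. Hence `E_exp[y | s, x]` has the right
integrals over the π-system `{A ∩ t⁻¹' C}` generating `σ(s, x, t)`, and is `E_exp[y | s, x, t]`.
Comparability identifies `E_obs[y | s, x]` and `E_exp[y | s, x]` with the same function of
`(x, s)`, the mean of the common conditional distribution; `h` agrees with it almost everywhere for
the observational law of `(x, s)`, hence, by domination, for the experimental one.
-/

open MeasureTheory ProbabilityTheory Set

namespace MeasurableSpace

variable {α β γ δ : Type*} [MeasurableSpace β] [MeasurableSpace γ] [MeasurableSpace δ]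

theorem comap_prodMk_swap (f : α → β) (g : α → γ) :
    MeasurableSpace.comap (fun a => (f a, g a)) inferInstance
      = MeasurableSpace.comap (fun a => (g a, f a)) inferInstance :=
  (comap_prodMk f g).trans ((sup_comm _ _).trans (comap_prodMk g f).symm)

theorem comap_prodMk_prodMk (f : α → β) (g : α → γ) (k : α → δ) :
    MeasurableSpace.comap (fun a => (f a, g a, k a)) inferInstance
      = MeasurableSpace.comap (fun a => (f a, g a)) inferInstance
        ⊔ MeasurableSpace.comap k inferInstance :=
  (comap_prodMk f _).trans <| (congrArg (_ ⊔ ·) (comap_prodMk g k)).trans <|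
    (sup_assoc _ _ _).symm.trans (congrArg (· ⊔ _) (comap_prodMk f g).symm)

end MeasurableSpace

section

variable {Ω : Type*}

theorem setIntegral_eq_measureReal_mul_integral_of_forall_Iic_rat {mΩ : MeasurableSpace Ω}
    {ν : Measure Ω} [IsProbabilityMeasure ν] {y : Ω → ℝ} (hy : Measurable y) {E : Set Ω}
    (hE : ∀ q : ℚ, ν (y ⁻¹' Iic (q : ℝ) ∩ E) = ν (y ⁻¹' Iic (q : ℝ)) * ν E) :
    ∫ ω in E, y ω ∂ν = ν.real E * ∫ ω, y ω ∂ν := by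
  have hmap : (ν.restrict E).map y = ν E • ν.map y := by
    refine ext_of_generate_finite _
      (BorelSpace.measurable_eq.trans Real.borel_eq_generateFrom_Iic_rat)
      Real.isPiSystem_Iic_rat ?_ ?_
    · intro u hu
      simp only [mem_iUnion, mem_singleton_iff] at hu
      obtain ⟨q, rfl⟩ := hu
      rw [Measure.map_apply hy measurableSet_Iic, Measure.restrict_apply (hy measurableSet_Iic),
        Measure.smul_apply, Measure.map_apply hy measurableSet_Iic, hE q, smul_eq_mul, mul_comm]
    · simp [Measure.map_apply hy]
  calc ∫ ω in E, y ω ∂ν = ∫ r, r ∂(ν.restrict E).map y :=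
        (integral_map hy.aemeasurable aestronglyMeasurable_id).symm
    _ = ν.real E * ∫ r, r ∂ν.map y := by
        rw [hmap, integral_smul_measure, smul_eq_mul, measureReal_def]
    _ = ν.real E * ∫ ω, y ω ∂ν :=
        congrArg (ν.real E * ·) (integral_map hy.aemeasurable aestronglyMeasurable_id)

theorem setIntegral_eq_of_isPiSystem {E : Type*} [NormedAddCommGroup E] [NormedSpace ℝ E]
    {m mΩ : MeasurableSpace Ω} {S : Set (Set Ω)} (hm : m ≤ mΩ) (hgen : m = .generateFrom S)
    (hS : IsPiSystem S) (huniv : univ ∈ S) {μ : Measure Ω} {f g : Ω → E}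
    (hf : Integrable f μ) (hg : Integrable g μ)
    (hfg : ∀ s ∈ S, ∫ ω in s, f ω ∂μ = ∫ ω in s, g ω ∂μ) {s : Set Ω} (hs : MeasurableSet[m] s) :
    ∫ ω in s, f ω ∂μ = ∫ ω in s, g ω ∂μ := by
  induction s, hs using MeasurableSpace.induction_on_inter hgen hS with
  | empty => simp
  | basic s hs => exact hfg s hs
  | compl s hs ih =>
    have hfg_univ : ∫ ω, f ω ∂μ = ∫ ω, g ω ∂μ := by
      simpa only [setIntegral_univ] using hfg univ huniv
    refine (add_right_inj (∫ ω in s, f ω ∂μ)).1 ?_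
    rw [integral_add_compl (μ := μ) (hm s hs) hf, hfg_univ, ih,
      integral_add_compl (μ := μ) (hm s hs) hg]
  | iUnion s hdisj hs ih =>
    rw [integral_iUnion (μ := μ) (fun i => hm _ (hs i)) hdisj hf.integrableOn,
      integral_iUnion (μ := μ) (fun i => hm _ (hs i)) hdisj hg.integrableOn, tsum_congr ih]

theorem isPiSystem_image2_inter (m₁ m₂ : MeasurableSpace Ω) :
    IsPiSystem (image2 (· ∩ ·) {s | MeasurableSet[m₁] s} {s | MeasurableSet[m₂] s}) := by
  rintro _ ⟨a, ha, b, hb, rfl⟩ _ ⟨a', ha', b', hb', rfl⟩ -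
  exact ⟨a ∩ a', ha.inter ha', b ∩ b', hb.inter hb', (inter_inter_inter_comm a b a' b').symm⟩

theorem generateFrom_image2_inter (m₁ m₂ : MeasurableSpace Ω) :
    .generateFrom (image2 (· ∩ ·) {s | MeasurableSet[m₁] s} {s | MeasurableSet[m₂] s})
      = m₁ ⊔ m₂ := by
  refine le_antisymm (MeasurableSpace.generateFrom_le ?_) (sup_le ?_ ?_)
  · rintro _ ⟨a, ha, b, hb, rfl⟩
    exact (le_sup_left (a := m₁) (b := m₂) a ha).inter (le_sup_right (a := m₁) (b := m₂) b hb)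
  · exact fun a ha => .basic _ ⟨a, ha, univ, .univ, inter_univ a⟩
  · exact fun b hb => .basic _ ⟨univ, .univ, b, hb, univ_inter b⟩

namespace ProbabilityTheory.CondIndepFun

variable {m mΩ : MeasurableSpace Ω} [StandardBorelSpace Ω] {hm : m ≤ mΩ} {μ : Measure Ω}
  [IsFiniteMeasure μ] {T : Type*} [MeasurableSpace T] {t : Ω → T} {y : Ω → ℝ}

theorem condExp_indicator_preimage_ae_eq_mul (hind : CondIndepFun m hm y t μ)
    (hy : Measurable y) (hyint : Integrable y μ) (ht : Measurable t)
    {C : Set T} (hC : MeasurableSet C) :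
    μ[(t ⁻¹' C).indicator y | m] =ᵐ[μ] μ[y | m] * μ⟦t ⁻¹' C | m⟧ := by
  -- countably many test sets, so that one null set serves all of them
  have hprod : ∀ᵐ ω ∂μ, ∀ q : ℚ, condExpKernel μ m ω (y ⁻¹' Iic (q : ℝ) ∩ t ⁻¹' C)
      = condExpKernel μ m ω (y ⁻¹' Iic (q : ℝ)) * condExpKernel μ m ω (t ⁻¹' C) :=
    ae_all_iff.2 fun q => ae_eq_of_ae_eq_trim
      (hind.measure_inter_preimage_eq_mul _ _ measurableSet_Iic hC)
  filter_upwards [condExp_ae_eq_integral_condExpKernel hm (hyint.indicator (ht hC)),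
    condExp_ae_eq_integral_condExpKernel hm hyint, condExpKernel_ae_eq_condExp hm (ht hC), hprod]
    with ω hyC hy' hC' hω
  rw [hyC, Pi.mul_apply, hy', ← hC', integral_indicator (ht hC),
    setIntegral_eq_measureReal_mul_integral_of_forall_Iic_rat hy hω, mul_comm]

theorem setIntegral_condExp_inter_preimage (hind : CondIndepFun m hm y t μ)
    (hy : Measurable y) (hyint : Integrable y μ) (ht : Measurable t)
    {A : Set Ω} (hA : MeasurableSet[m] A) {C : Set T} (hC : MeasurableSet C) :
    ∫ ω in A ∩ t ⁻¹' C, (μ[y | m]) ω ∂μ = ∫ ω in A ∩ t ⁻¹' C, y ω ∂μ := by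
  have hindicator : (t ⁻¹' C).indicator (μ[y | m]) = μ[y | m] * (t ⁻¹' C).indicator 1 := by
    ext ω
    by_cases hω : ω ∈ t ⁻¹' C <;> simp [hω]
  have hpull : μ[(t ⁻¹' C).indicator (μ[y | m]) | m] =ᵐ[μ] μ[y | m] * μ⟦t ⁻¹' C | m⟧ := by
    rw [hindicator]
    exact condExp_mul_of_stronglyMeasurable_left stronglyMeasurable_condExp
      (hindicator ▸ integrable_condExp.indicator (ht hC)) ((integrable_const 1).indicator (ht hC))
  calc ∫ ω in A ∩ t ⁻¹' C, (μ[y | m]) ω ∂μ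
      = ∫ ω in A, μ[(t ⁻¹' C).indicator (μ[y | m]) | m] ω ∂μ := by
        rw [setIntegral_condExp hm (integrable_condExp.indicator (ht hC)) hA,
          setIntegral_indicator (ht hC)]
    _ = ∫ ω in A, μ[(t ⁻¹' C).indicator y | m] ω ∂μ :=
        setIntegral_congr_ae (hm A hA) ((hpull.trans
          (hind.condExp_indicator_preimage_ae_eq_mul hy hyint ht hC).symm).mono fun _ h _ => h)
    _ = ∫ ω in A ∩ t ⁻¹' C, y ω ∂μ := by
        rw [setIntegral_condExp hm (hyint.indicator (ht hC)) hA, setIntegral_indicator (ht hC)]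

theorem condExp_sup_comap_ae_eq (hind : CondIndepFun m hm y t μ)
    (hy : Measurable y) (hyint : Integrable y μ) (ht : Measurable t) :
    μ[y | m ⊔ MeasurableSpace.comap t inferInstance] =ᵐ[μ] μ[y | m] := by
  have hle : m ⊔ MeasurableSpace.comap t inferInstance ≤ mΩ := sup_le hm ht.comap_le
  have hmeas : StronglyMeasurable[m ⊔ MeasurableSpace.comap t inferInstance] (μ[y | m]) :=
    stronglyMeasurable_condExp.mono le_sup_left
  refine (ae_eq_condExp_of_forall_setIntegral_eq hle hyint
    (fun _ _ _ => integrable_condExp.integrableOn) (fun s hs _ => ?_)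
    hmeas.aestronglyMeasurable).symm
  refine setIntegral_eq_of_isPiSystem hle (generateFrom_image2_inter _ _).symm
    (isPiSystem_image2_inter _ _) ⟨univ, .univ, univ, ⟨univ, .univ, preimage_univ⟩, inter_univ _⟩
    integrable_condExp hyint ?_ hs
  rintro _ ⟨A, hA, _, ⟨C, hC, rfl⟩, rfl⟩
  exact hind.setIntegral_condExp_inter_preimage hy hyint ht hA hC

end ProbabilityTheory.CondIndepFun

theorem ae_eq_condExp_comap_of_condDistrib_eq {mΩ : MeasurableSpace Ω} {β : Type*}
    [MeasurableSpace β] {Z : Ω → β} (hZ : Measurable Z) {μ ν : Measure Ω} [IsFiniteMeasure μ]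
    [IsFiniteMeasure ν] {y : Ω → ℝ}
    (hyμ : Integrable y μ) (hyν : Integrable y ν) (hcond : condDistrib y Z μ = condDistrib y Z ν)
    (hac : ν.map Z ≪ μ.map Z) {h : β → ℝ} (hh : Measurable h)
    (hver : h ∘ Z =ᵐ[μ] μ[y | MeasurableSpace.comap Z inferInstance]) :
    h ∘ Z =ᵐ[ν] ν[y | MeasurableSpace.comap Z inferInstance] := by
  let g : β → ℝ := fun b => ∫ r, r ∂condDistrib y Z μ b
  have hg : Measurable g := stronglyMeasurable_id.integral_kernel.measurable
  have hμ : h =ᵐ[μ.map Z] g := (ae_map_iff hZ.aemeasurable (measurableSet_eq_fun hh hg)).2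
    (hver.trans (condExp_ae_eq_integral_condDistrib' hZ hyμ))
  have hν : ν[y | MeasurableSpace.comap Z inferInstance] =ᵐ[ν] g ∘ Z := by
    have hν' := condExp_ae_eq_integral_condDistrib' hZ hyν
    rwa [← hcond] at hν'
  exact (ae_eq_comp hZ.aemeasurable (hac.ae_eq hμ)).trans hν.symm

end

theorem stmt13_general {Ω X S T : Type*} {mΩ : MeasurableSpace Ω} [StandardBorelSpace Ω]
    [MeasurableSpace X] [MeasurableSpace S] [MeasurableSpace T]
    (μobs μexp : Measure Ω) [IsProbabilityMeasure μobs] [IsProbabilityMeasure μexp]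
    (x : Ω → X) (s : Ω → S) (t : Ω → T) (y : Ω → ℝ)
    (hx : Measurable x) (hs : Measurable s) (ht : Measurable t) (hy : Measurable y)
    (hyobs : Integrable y μobs) (hyexp : Integrable y μexp)
    -- comparability: the regular conditional distributions of `y` given `(x, s)` agree
    (hcomp : condDistrib y (fun ω => (x ω, s ω)) μobs
      = condDistrib y (fun ω => (x ω, s ω)) μexp)
    -- the experimental covariate–surrogate distribution is dominated by the observational
    -- one (so that the common conditional distribution is meaningful on the experimental data)
    (hac : μexp.map (fun ω => (x ω, s ω)) ≪ μobs.map (fun ω => (x ω, s ω)))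
    -- surrogacy under the experimental measure
    (hsurr : CondIndepFun (MeasurableSpace.comap (fun ω => (s ω, x ω)) inferInstance)
      ((hs.prodMk hx).comap_le) y t μexp)
    (h : S × X → ℝ) (hh : Measurable h)
    -- `h(s,x)` is a version of `E_obs[y | s, x]`
    (hhver : (fun ω => h (s ω, x ω)) =ᵐ[μobs]
      μobs[y | MeasurableSpace.comap (fun ω => (s ω, x ω)) inferInstance]) :
    (fun ω => h (s ω, x ω)) =ᵐ[μexp]
      μexp[y | MeasurableSpace.comap (fun ω => (s ω, x ω, t ω)) inferInstance] := by
  have hregression : (fun ω => h (s ω, x ω)) =ᵐ[μexp]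
      μexp[y | MeasurableSpace.comap (fun ω => (s ω, x ω)) inferInstance] := by
    rw [MeasurableSpace.comap_prodMk_swap] at hhver ⊢
    exact ae_eq_condExp_comap_of_condDistrib_eq (hx.prodMk hs) hyobs hyexp hcomp hac
      (hh.comp measurable_swap) hhver
  rw [MeasurableSpace.comap_prodMk_prodMk]
  exact hregression.trans (hsurr.condExp_sup_comap_ae_eq hy hyexp ht).symm

/-- under comparability (the conditional distribution of `y` given `(x, s)` is
the same under `μobs` and `μexp`) and surrogacy under `μexp` (`y ⊥ t | (s, x)`), the
observational regression function `h(s,x) = E_obs[y | s, x]` is a version of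
`E_exp[y | s, x, t]`. -/
theorem stmt13 {Ω X S T : Type*} {mΩ : MeasurableSpace Ω} [StandardBorelSpace Ω] [Nonempty Ω]
    [MeasurableSpace X] [MeasurableSpace S] [MeasurableSpace T]
    (μobs μexp : Measure Ω) [IsProbabilityMeasure μobs] [IsProbabilityMeasure μexp]
    (x : Ω → X) (s : Ω → S) (t : Ω → T) (y : Ω → ℝ)
    (hx : Measurable x) (hs : Measurable s) (ht : Measurable t) (hy : Measurable y)
    (hyobs : Integrable y μobs) (hyexp : Integrable y μexp)
    -- comparability: the regular conditional distributions of `y` given `(x, s)` agree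
    (hcomp : condDistrib y (fun ω => (x ω, s ω)) μobs
      = condDistrib y (fun ω => (x ω, s ω)) μexp)
    -- the experimental covariate–surrogate distribution is dominated by the observational
    -- one (so that the common conditional distribution is meaningful on the experimental data)
    (hac : μexp.map (fun ω => (x ω, s ω)) ≪ μobs.map (fun ω => (x ω, s ω)))
    -- surrogacy under the experimental measure
    (hsurr : CondIndepFun (MeasurableSpace.comap (fun ω => (s ω, x ω)) inferInstance)
      ((hs.prodMk hx).comap_le) y t μexp)
    (h : S × X → ℝ) (hh : Measurable h)
    -- `h(s,x)` is a version of `E_obs[y | s, x]`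
    (hhver : (fun ω => h (s ω, x ω)) =ᵐ[μobs]
      μobs[y | MeasurableSpace.comap (fun ω => (s ω, x ω)) inferInstance]) :
    (fun ω => h (s ω, x ω)) =ᵐ[μexp]
      μexp[y | MeasurableSpace.comap (fun ω => (s ω, x ω, t ω)) inferInstance] :=
  stmt13_general (mΩ := mΩ) μobs μexp x s t y hx hs ht hy hyobs hyexp hcomp hac hsurr h hh hhver
end
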